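/- Perturbed linear system bound: let A, A_S be positive definite d×d matrices with (1−ε)A ⪯ A_S ⪯ (1+ε)A for some ε ∈ (0, 1/2), and let b, b_S ∈ ℝ^d with ‖b_S − b‖_{A^{-1}} ≤ ε·C. If θ* = A^{-1} b, θ̂ = A_S^{-1} b_S, and ‖θ*‖_A ≤ C, then ‖θ̂ − θ*‖_A ≤ 4εC. -/

import Mathlib

/-!
Put `e = θ̂ - θ*`, so that `A_S e = (b_S - b) - (A_S - A) θ*`. Testing `A_S e` against `e` and
using `(1 - ε) A ⪯ A_S` together with Cauchy–Schwarz for the dual norms `‖·‖_A`, `‖·‖_{A⁻¹}` gives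
`(1 - ε) ‖e‖_A ≤ ‖A_S e‖_{A⁻¹}`. The sandwich `-ε A ⪯ A_S - A ⪯ ε A` bounds the bilinear form of
`A_S - A` by `ε ‖x‖_A ‖y‖_A` (polarization, then a discriminant), hence
`‖(A_S - A) θ*‖_{A⁻¹} ≤ ε ‖θ*‖_A ≤ ε C`. So `(1 - ε) ‖e‖_A ≤ 2 ε C`, and `1 - ε > 1/2`.
-/

open Matrix

namespace Matrix

open scoped MatrixOrder

variable {n : Type*} [Fintype n]

theorem PosSemidef.inner_eq_dotProduct_mulVec {A : Matrix n n ℝ} (hA : A.PosSemidef)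
    (x y : n → ℝ) : @inner ℝ _ (A.toInnerProductSpace hA).toInner x y = x ⬝ᵥ A *ᵥ y :=
  dotProduct_comm _ _

theorem PosSemidef.norm_eq_sqrt_dotProduct_mulVec {A : Matrix n n ℝ} (hA : A.PosSemidef)
    (x : n → ℝ) : @norm _ (A.toSeminormedAddCommGroup hA).toNorm x = √(x ⬝ᵥ A *ᵥ x) := by
  let _ := A.toSeminormedAddCommGroup hA
  let _ := A.toInnerProductSpace hA
  rw [@norm_eq_sqrt_re_inner ℝ, RCLike.re_to_real, hA.inner_eq_dotProduct_mulVec]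

theorem PosSemidef.sqrt_dotProduct_mulVec_sub_le {A : Matrix n n ℝ} (hA : A.PosSemidef)
    (x y : n → ℝ) : √((x - y) ⬝ᵥ A *ᵥ (x - y)) ≤ √(x ⬝ᵥ A *ᵥ x) + √(y ⬝ᵥ A *ᵥ y) := by
  simpa only [hA.norm_eq_sqrt_dotProduct_mulVec] using
    @norm_sub_le _ (A.toSeminormedAddCommGroup hA).toSeminormedAddGroup x y

theorem PosSemidef.dotProduct_mulVec_le_sqrt_mul_sqrt {A : Matrix n n ℝ} (hA : A.PosSemidef)
    (x y : n → ℝ) : x ⬝ᵥ A *ᵥ y ≤ √(x ⬝ᵥ A *ᵥ x) * √(y ⬝ᵥ A *ᵥ y) := by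
  simpa only [hA.norm_eq_sqrt_dotProduct_mulVec, hA.inner_eq_dotProduct_mulVec] using
    @real_inner_le_norm _ (A.toSeminormedAddCommGroup hA) (A.toInnerProductSpace hA) x y

theorem IsHermitian.two_mul_dotProduct_mulVec_le {A D : Matrix n n ℝ} (hD : D.IsHermitian)
    {ε : ℝ} (h₁ : -(ε • A) ≤ D) (h₂ : D ≤ ε • A) (x y : n → ℝ) :
    2 * (x ⬝ᵥ D *ᵥ y) ≤ ε * (x ⬝ᵥ A *ᵥ x + y ⬝ᵥ A *ᵥ y) := by
  have hsymm : y ⬝ᵥ D *ᵥ x = x ⬝ᵥ D *ᵥ y := by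
    rw [← dotProduct_transpose_mulVec, (isHermitian_iff_isSymm.mp hD).eq]
  have hsum := (le_iff.mp h₂).dotProduct_mulVec_nonneg (x + y)
  have hdiff := (le_iff.mp h₁).dotProduct_mulVec_nonneg (x - y)
  simp only [star_trivial, sub_neg_eq_add, sub_mulVec, add_mulVec, smul_mulVec, mulVec_add,
    mulVec_sub, dotProduct_add, dotProduct_sub, add_dotProduct, sub_dotProduct,
    dotProduct_smul, smul_eq_mul] at hsum hdiff
  linarith

theorem IsHermitian.sq_dotProduct_mulVec_le {A D : Matrix n n ℝ} (hD : D.IsHermitian)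
    {ε : ℝ} (h₁ : -(ε • A) ≤ D) (h₂ : D ≤ ε • A) (x y : n → ℝ) :
    (x ⬝ᵥ D *ᵥ y) ^ 2 ≤ ε ^ 2 * ((x ⬝ᵥ A *ᵥ x) * (y ⬝ᵥ A *ᵥ y)) := by
  have hquad (t : ℝ) :
      0 ≤ ε * (x ⬝ᵥ A *ᵥ x) * (t * t) + -2 * (x ⬝ᵥ D *ᵥ y) * t + ε * (y ⬝ᵥ A *ᵥ y) := by
    have := hD.two_mul_dotProduct_mulVec_le h₁ h₂ (t • x) y
    simp only [smul_dotProduct, mulVec_smul, dotProduct_smul, smul_eq_mul] at this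
    linarith
  have := discrim_le_zero hquad
  rw [discrim] at this
  linear_combination this / 4

variable [DecidableEq n]

theorem PosDef.mulVec_inv_mulVec {A : Matrix n n ℝ} (hA : A.PosDef) (v : n → ℝ) :
    A *ᵥ (A⁻¹ *ᵥ v) = v := by
  rw [mulVec_mulVec, mul_nonsing_inv _ ((isUnit_iff_isUnit_det A).mp hA.isUnit), one_mulVec]

theorem PosDef.dotProduct_le_sqrt_mul_sqrt_inv {A : Matrix n n ℝ} (hA : A.PosDef)
    (x y : n → ℝ) : x ⬝ᵥ y ≤ √(x ⬝ᵥ A *ᵥ x) * √(y ⬝ᵥ A⁻¹ *ᵥ y) := by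
  have hy : (A⁻¹ *ᵥ y) ⬝ᵥ A *ᵥ (A⁻¹ *ᵥ y) = y ⬝ᵥ A⁻¹ *ᵥ y := by
    rw [hA.mulVec_inv_mulVec, dotProduct_comm]
  have := hA.posSemidef.dotProduct_mulVec_le_sqrt_mul_sqrt x (A⁻¹ *ᵥ y)
  rwa [hy, hA.mulVec_inv_mulVec] at this

/-- For `ε < 1` this is the bound `‖A^{1/2} B⁻¹ A^{1/2}‖ ≤ 1 / (1 - ε)` of the paper. -/
theorem PosDef.mul_sqrt_dotProduct_mulVec_le {A B : Matrix n n ℝ} (hA : A.PosDef) {ε : ℝ}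
    (hAB : (1 - ε) • A ≤ B) (e : n → ℝ) :
    (1 - ε) * √(e ⬝ᵥ A *ᵥ e) ≤ √((B *ᵥ e) ⬝ᵥ A⁻¹ *ᵥ (B *ᵥ e)) := by
  set q := √(e ⬝ᵥ A *ᵥ e)
  have hq : 0 ≤ q := Real.sqrt_nonneg _
  have hq2 : q ^ 2 = e ⬝ᵥ A *ᵥ e := Real.sq_sqrt (hA.posSemidef.dotProduct_mulVec_nonneg e)
  have hlow : (1 - ε) * q ^ 2 ≤ e ⬝ᵥ B *ᵥ e := by
    have := (le_iff.mp hAB).dotProduct_mulVec_nonneg e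
    simp only [star_trivial, sub_mulVec, smul_mulVec, dotProduct_sub, dotProduct_smul,
      smul_eq_mul] at this
    rw [hq2]
    linarith
  have key : (1 - ε) * q ^ 2 ≤ q * √((B *ᵥ e) ⬝ᵥ A⁻¹ *ᵥ (B *ᵥ e)) :=
    hlow.trans (hA.dotProduct_le_sqrt_mul_sqrt_inv e (B *ᵥ e))
  rcases hq.eq_or_lt with hq0 | hqpos
  · rw [← hq0, mul_zero]
    exact Real.sqrt_nonneg _
  · nlinarith

theorem IsHermitian.sqrt_mulVec_dotProduct_inv_le {A D : Matrix n n ℝ} (hA : A.PosDef)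
    (hD : D.IsHermitian) {ε : ℝ} (hε : 0 ≤ ε) (h₁ : -(ε • A) ≤ D) (h₂ : D ≤ ε • A)
    (w : n → ℝ) : √((D *ᵥ w) ⬝ᵥ A⁻¹ *ᵥ (D *ᵥ w)) ≤ ε * √(w ⬝ᵥ A *ᵥ w) := by
  set v := A⁻¹ *ᵥ (D *ᵥ w)
  set s := (D *ᵥ w) ⬝ᵥ v
  have hs : 0 ≤ s := hA.inv.posSemidef.dotProduct_mulVec_nonneg (D *ᵥ w)
  have hw : 0 ≤ w ⬝ᵥ A *ᵥ w := hA.posSemidef.dotProduct_mulVec_nonneg w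
  have hvAv : v ⬝ᵥ A *ᵥ v = s := by rw [hA.mulVec_inv_mulVec, dotProduct_comm]
  have hsq := hD.sq_dotProduct_mulVec_le h₁ h₂ v w
  rw [dotProduct_comm v, hvAv] at hsq
  have hs_le : s ≤ ε ^ 2 * (w ⬝ᵥ A *ᵥ w) := by
    rcases hs.eq_or_lt with hs0 | hspos
    · rw [← hs0]
      exact mul_nonneg (sq_nonneg ε) hw
    · nlinarith
  calc √s ≤ √(ε ^ 2 * (w ⬝ᵥ A *ᵥ w)) := Real.sqrt_le_sqrt hs_le
    _ = ε * √(w ⬝ᵥ A *ᵥ w) := by rw [Real.sqrt_mul (sq_nonneg ε), Real.sqrt_sq hε]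

end Matrix

theorem perturbed_system_bound_general (d : ℕ)
    (A AS : Matrix (Fin d) (Fin d) ℝ) (hA : A.PosDef) (hAS : AS.PosDef)
    (ε : ℝ) (hε0 : 0 < ε) (hε1 : ε < 1/2)
    (hlow : (AS - (1 - ε) • A).PosSemidef)
    (hhigh : ((1 + ε) • A - AS).PosSemidef)
    (b bS : Fin d → ℝ) (C : ℝ)
    (hb : Real.sqrt ((bS - b) ⬝ᵥ A⁻¹ *ᵥ (bS - b)) ≤ ε * C)
    (θstar θhat : Fin d → ℝ)
    (hθstar : θstar = A⁻¹ *ᵥ b) (hθhat : θhat = AS⁻¹ *ᵥ bS)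
    (hnorm : Real.sqrt (θstar ⬝ᵥ A *ᵥ θstar) ≤ C) :
    Real.sqrt ((θhat - θstar) ⬝ᵥ A *ᵥ (θhat - θstar)) ≤ 4 * ε * C := by
  have hD : (AS - A).IsHermitian := hAS.isHermitian.sub hA.isHermitian
  open scoped MatrixOrder in
  have h₁ : -(ε • A) ≤ AS - A := by
    rw [le_iff, show AS - A - -(ε • A) = AS - (1 - ε) • A by module]
    exact hlow
  open scoped MatrixOrder in
  have h₂ : AS - A ≤ ε • A := by
    rw [le_iff, show ε • A - (AS - A) = (1 + ε) • A - AS by module]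
    exact hhigh
  have hresidual : AS *ᵥ (θhat - θstar) = (bS - b) - (AS - A) *ᵥ θstar := by
    rw [mulVec_sub, sub_mulVec, hθhat, hAS.mulVec_inv_mulVec, hθstar, hA.mulVec_inv_mulVec]
    abel
  have hresidual_le :
      √((bS - b - (AS - A) *ᵥ θstar) ⬝ᵥ A⁻¹ *ᵥ (bS - b - (AS - A) *ᵥ θstar)) ≤ 2 * ε * C :=
    calc _ ≤ √((bS - b) ⬝ᵥ A⁻¹ *ᵥ (bS - b))
          + √(((AS - A) *ᵥ θstar) ⬝ᵥ A⁻¹ *ᵥ ((AS - A) *ᵥ θstar)) :=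
          hA.inv.posSemidef.sqrt_dotProduct_mulVec_sub_le _ _
      _ ≤ ε * C + ε * C := by
          gcongr
          exact (hD.sqrt_mulVec_dotProduct_inv_le hA hε0.le h₁ h₂ θstar).trans
            (mul_le_mul_of_nonneg_left hnorm hε0.le)
      _ = 2 * ε * C := by ring
  have hstable := hA.mul_sqrt_dotProduct_mulVec_le hlow (θhat - θstar)
  rw [hresidual] at hstable
  nlinarith [Real.sqrt_nonneg ((θhat - θstar) ⬝ᵥ A *ᵥ (θhat - θstar))]

/-- Perturbed linear system bound: spectral sandwich plus right-hand-side closeness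
give ‖θ̂ − θ*‖_A ≤ 4εC. -/
theorem perturbed_system_bound (d : ℕ)
    (A AS : Matrix (Fin d) (Fin d) ℝ) (hA : A.PosDef) (hAS : AS.PosDef)
    (ε : ℝ) (hε0 : 0 < ε) (hε1 : ε < 1/2)
    (hlow : (AS - (1 - ε) • A).PosSemidef)
    (hhigh : ((1 + ε) • A - AS).PosSemidef)
    (b bS : Fin d → ℝ) (C : ℝ) (hC : 0 ≤ C)
    (hb : Real.sqrt ((bS - b) ⬝ᵥ A⁻¹ *ᵥ (bS - b)) ≤ ε * C)
    (θstar θhat : Fin d → ℝ)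
    (hθstar : θstar = A⁻¹ *ᵥ b) (hθhat : θhat = AS⁻¹ *ᵥ bS)
    (hnorm : Real.sqrt (θstar ⬝ᵥ A *ᵥ θstar) ≤ C) :
    Real.sqrt ((θhat - θstar) ⬝ᵥ A *ᵥ (θhat - θstar)) ≤ 4 * ε * C :=
  perturbed_system_bound_general d A AS hA hAS ε hε0 hε1 hlow hhigh b bS C hb θstar θhat hθstar
    hθhat hnorm
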